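/- arXiv:1202.0251 — 2 statements merged into one kernel-verified Lean document; each statement's English description precedes it below -/
import Mathlib

section
/- Let Φ : X → ℂ, r : X → ℝ≥0, and χ : X → [0,1] be functions on a set X, and suppose there are constants K > 0 and c > 0 with 2·Re Φ(x) + |Φ(x)|/2 ≥ c·(r(x) + K·d(x)³) for all x with χ(x) > 0, where d : X → ℝ≥0. Define S(x) = χ(x)·Φ(x) + (1 - χ(x))·d(x)². Assume moreover χ(x) = 0 whenever d(x) ≥ 3ε/4 and d(x) ≤ 3ε/4 ≤ 1 on the support of χ. Then there is a constant c' > 0 such that |S(x)| ≥ c'·d(x)³ for all x ∈ X with d(x) ≤ 1. In particular S(x) ≠ 0 whenever d(x) > 0. -/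
/-!
Write `S = tΦ + (1 - t)s` with `t ∈ [0, 1]` and `s ≥ 0` real. Since `‖S‖ ≥ Re S` and, by the
triangle inequality, `t‖Φ‖ ≤ ‖S‖ + (1 - t)s`, the quantity `t(2 Re Φ + ‖Φ‖/2)` controlled by the
hypothesis is at most `(5/2)‖S‖ - (3/2)(1 - t)s`. With `s = d²` and `d ≤ 1`, the two pieces
`t·cK d³` and `(3/2)(1 - t)d²` together dominate `min(cK, 3/2) d³`.
-/

theorem norm_mul_add_one_sub_mul_ofReal_ge (Φ : ℂ) {t s : ℝ} (ht0 : 0 ≤ t) (ht1 : t ≤ 1)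
    (hs : 0 ≤ s) :
    t * (2 * Φ.re + ‖Φ‖ / 2) + 3 / 2 * ((1 - t) * s) ≤
      5 / 2 * ‖(t : ℂ) * Φ + (1 - (t : ℂ)) * (s : ℂ)‖ := by
  set S := (t : ℂ) * Φ + (1 - (t : ℂ)) * (s : ℂ)
  have hre : S.re = t * Φ.re + (1 - t) * s := by simp [S]
  have hnorm : t * ‖Φ‖ ≤ ‖S‖ + (1 - t) * s :=
    calc t * ‖Φ‖ = ‖(t : ℂ) * Φ‖ := by rw [norm_mul, Complex.norm_real, Real.norm_of_nonneg ht0]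
      _ = ‖S - ((1 - t : ℝ) : ℂ) * (s : ℂ)‖ := by push_cast [S]; ring_nf
      _ ≤ ‖S‖ + (1 - t) * s := by
          refine (norm_sub_le _ _).trans_eq ?_
          rw [norm_mul, Complex.norm_real, Complex.norm_real, Real.norm_of_nonneg (by linarith),
            Real.norm_of_nonneg hs]
  linarith [Complex.re_le_norm S]

theorem min_mul_pow_three_le {A B t a : ℝ} (hB : 0 ≤ B) (ht0 : 0 ≤ t) (ht1 : t ≤ 1)
    (ha0 : 0 ≤ a) (ha1 : a ≤ 1) :
    min A B * a ^ 3 ≤ t * (A * a ^ 3) + B * ((1 - t) * a ^ 2) := by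
  have ha3 : 0 ≤ a ^ 3 := pow_nonneg ha0 3
  have hcube : a ^ 3 ≤ a ^ 2 := pow_le_pow_of_le_one ha0 ha1 (by norm_num)
  calc min A B * a ^ 3 = t * (min A B * a ^ 3) + (1 - t) * (min A B * a ^ 3) := by ring
    _ ≤ t * (A * a ^ 3) + (1 - t) * (B * a ^ 2) := by
        have hA := mul_le_mul_of_nonneg_right (min_le_left A B) ha3
        have hB' := mul_le_mul (min_le_right A B) hcube ha3 hB
        gcongr ?_ + ?_ <;> apply mul_le_mul_of_nonneg_left <;> linarith
    _ = t * (A * a ^ 3) + B * ((1 - t) * a ^ 2) := by ring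

theorem patched_function_lower_bound_general {X : Type*}
    (Φ : X → ℂ) (r d χ : X → ℝ) (S : X → ℂ)
    (K c : ℝ) (hK : 0 < K) (hc : 0 < c)
    (hχ0 : ∀ x, 0 ≤ χ x) (hχ1 : ∀ x, χ x ≤ 1)
    (hr : ∀ x, 0 ≤ r x) (hd : ∀ x, 0 ≤ d x)
    (hlow : ∀ x, 0 < χ x →
      2 * (Φ x).re + ‖Φ x‖ / 2 ≥ c * (r x + K * d x ^ 3))
    (hS : ∀ x, S x = (χ x : ℂ) * Φ x + ((1 : ℂ) - (χ x : ℂ)) * ((d x ^ 2 : ℝ) : ℂ)) :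
    ∃ c' > 0, ∀ x, d x ≤ 1 → ‖S x‖ ≥ c' * d x ^ 3 ∧
      (0 < d x → S x ≠ 0) := by
  refine ⟨2 / 5 * min (c * K) (3 / 2), by positivity, fun x hx1 => ?_⟩
  have hcut : χ x * (c * K * d x ^ 3) ≤ χ x * (2 * (Φ x).re + ‖Φ x‖ / 2) := by
    rcases (hχ0 x).eq_or_lt with hzero | hpos
    · simp [← hzero]
    · have := hlow x hpos
      have := mul_nonneg hc.le (hr x)
      gcongr
      linarith
  have hpatch := norm_mul_add_one_sub_mul_ofReal_ge (Φ x) (hχ0 x) (hχ1 x) (sq_nonneg (d x))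
  have hmin := min_mul_pow_three_le (A := c * K) (by norm_num : (0 : ℝ) ≤ 3 / 2) (hχ0 x) (hχ1 x)
    (hd x) hx1
  have hbound : ‖S x‖ ≥ 2 / 5 * min (c * K) (3 / 2) * d x ^ 3 := by
    rw [hS]; linarith
  refine ⟨hbound, fun hdx hzero => ?_⟩
  rw [hzero, norm_zero] at hbound
  have : 0 < min (c * K) (3 / 2) := lt_min (mul_pos hc hK) (by norm_num)
  nlinarith [pow_pos hdx 3]

theorem patched_function_lower_bound {X : Type*}
    (Φ : X → ℂ) (r d χ : X → ℝ) (S : X → ℂ)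
    (K c ε : ℝ) (hK : 0 < K) (hc : 0 < c) (hε : 0 < ε)
    (hχ0 : ∀ x, 0 ≤ χ x) (hχ1 : ∀ x, χ x ≤ 1)
    (hr : ∀ x, 0 ≤ r x) (hd : ∀ x, 0 ≤ d x)
    (hlow : ∀ x, 0 < χ x →
      2 * (Φ x).re + ‖Φ x‖ / 2 ≥ c * (r x + K * d x ^ 3))
    (hsupp : ∀ x, 3 * ε / 4 ≤ d x → χ x = 0)
    (hsmall : ∀ x, 0 < χ x → d x ≤ 3 * ε / 4 ∧ 3 * ε / 4 ≤ 1)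
    (hS : ∀ x, S x = (χ x : ℂ) * Φ x + ((1 : ℂ) - (χ x : ℂ)) * ((d x ^ 2 : ℝ) : ℂ)) :
    ∃ c' > 0, ∀ x, d x ≤ 1 → ‖S x‖ ≥ c' * d x ^ 3 ∧
      (0 < d x → S x ≠ 0) :=
  patched_function_lower_bound_general Φ r d χ S K c hK hc hχ0 hχ1 hr hd hlow hS
end

section
/- Let r : ℂⁿ → ℝ be a C³ function, and define Φ_K(ζ,z) = F(ζ,z) - r(ζ) + K‖ζ-z‖³ where F is the Levi polynomial of r at ζ. Then there exist a neighborhood of the diagonal and a constant M such that for all ζ, z with ‖ζ-z‖ small, 2·Re Φ_K(ζ,z) ≥ -r(ζ) - r(z) + L(r,ζ; ζ-z) + (2K - M)·‖ζ-z‖³, where L(r,ζ;·) is the Levi form of r at ζ and M depends only on the C³-norm of r. In particular, for K ≥ M/2, 2·Re Φ_K(ζ,z) ≥ -r(ζ) - r(z) + L(r,ζ; ζ-z) + K·‖ζ-z‖³. -/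
/-!
Put `h = ζ - z`. For real `r`, the Wirtinger calculus gives `2 Re ∑ ∂r/∂ζ_j(ζ) h_j = Dr(ζ) h` and
`Re ∑ ∂²r/∂ζ_j∂ζ_k(ζ) h_j h_k + Re L(r,ζ;h) = ½ D²r(ζ)(h,h)`, the latter because `D²r(ζ)` is
symmetric. Hence `2 Re Φ_K(ζ,z)` equals `-r(ζ) - r(z) + Re L(r,ζ;ζ-z) + 2K‖ζ-z‖³` plus the
second-order Taylor remainder of `r` at `ζ`, evaluated at `z`. Since `r` is `C³`, `D²r` is
Lipschitz on a compact neighbourhood of `Q`, and two applications of the mean value inequality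
bound that remainder by `M ‖ζ-z‖³`.
-/

open Complex

/-- Wirtinger derivative `∂f/∂ζ_j = (1/2)(∂f/∂x_j - i ∂f/∂y_j)`. -/
noncomputable def wirtingerDz {n : ℕ} (f : EuclideanSpace ℂ (Fin n) → ℂ)
    (ζ : EuclideanSpace ℂ (Fin n)) (j : Fin n) : ℂ :=
  (1 / 2 : ℂ) * (fderiv ℝ f ζ (EuclideanSpace.single j 1)
    - Complex.I * fderiv ℝ f ζ (EuclideanSpace.single j Complex.I))

/-- Conjugate Wirtinger derivative `∂f/∂ζ̄_j = (1/2)(∂f/∂x_j + i ∂f/∂y_j)`. -/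
noncomputable def wirtingerDzbar {n : ℕ} (f : EuclideanSpace ℂ (Fin n) → ℂ)
    (ζ : EuclideanSpace ℂ (Fin n)) (j : Fin n) : ℂ :=
  (1 / 2 : ℂ) * (fderiv ℝ f ζ (EuclideanSpace.single j 1)
    + Complex.I * fderiv ℝ f ζ (EuclideanSpace.single j Complex.I))

/-- The Levi polynomial of `r` at `ζ` evaluated at `z`. -/
noncomputable def leviPolynomial {n : ℕ} (r : EuclideanSpace ℂ (Fin n) → ℝ)
    (ζ z : EuclideanSpace ℂ (Fin n)) : ℂ :=
  (∑ j : Fin n, wirtingerDz (fun w => (r w : ℂ)) ζ j * (ζ j - z j))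
    - (1 / 2 : ℂ) * ∑ j : Fin n, ∑ k : Fin n,
        wirtingerDz (fun w => wirtingerDz (fun u => (r u : ℂ)) w k) ζ j
          * (ζ j - z j) * (ζ k - z k)

/-- The Levi form `L(r,ζ;t) = ∑_{j,k} ∂²r/∂ζ_j∂ζ̄_k(ζ) t_j conj(t_k)`. -/
noncomputable def leviForm {n : ℕ} (r : EuclideanSpace ℂ (Fin n) → ℝ)
    (ζ t : EuclideanSpace ℂ (Fin n)) : ℂ :=
  ∑ j : Fin n, ∑ k : Fin n,
    wirtingerDzbar (fun w => wirtingerDz (fun u => (r u : ℂ)) w j) ζ k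
      * t j * (starRingEnd ℂ) (t k)

/-- The modified support function `Φ_K(ζ,z) = F(ζ,z) - r(ζ) + K‖ζ-z‖³`. -/
noncomputable def PhiK {n : ℕ} (r : EuclideanSpace ℂ (Fin n) → ℝ) (K : ℝ)
    (ζ z : EuclideanSpace ℂ (Fin n)) : ℂ :=
  leviPolynomial r ζ z - (r ζ : ℂ) + ((K * ‖ζ - z‖ ^ 3 : ℝ) : ℂ)

open Metric NNReal

section Taylor

variable {E F : Type*} [NormedAddCommGroup E] [NormedSpace ℝ E]
  [NormedAddCommGroup F] [NormedSpace ℝ F]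

noncomputable def taylorRemainderTwo (g : E → F) (x y : E) : F :=
  g y - g x - fderiv ℝ g x (y - x) - (1 / 2 : ℝ) • fderiv ℝ (fderiv ℝ g) x (y - x) (y - x)

theorem norm_sub_sub_fderiv_le_of_lipschitzOnWith {f : E → F} {x y : E} {ρ : ℝ} {C : ℝ≥0}
    (hf : Differentiable ℝ f) (hL : LipschitzOnWith C (fderiv ℝ f) (closedBall x ρ))
    (hy : y ∈ closedBall x ρ) :
    ‖f y - f x - fderiv ℝ f x (y - x)‖ ≤ C * ρ * ‖y - x‖ :=
  (convex_closedBall x ρ).norm_image_sub_le_of_norm_fderiv_le' (fun w _ => hf w)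
    (fun w hw => by
      rw [← dist_eq_norm]
      exact (hL.dist_le_mul w hw x (mem_closedBall_self (dist_nonneg.trans hw))).trans
        (by gcongr; exact hw))
    (mem_closedBall_self (dist_nonneg.trans hy)) hy

theorem norm_taylorRemainderTwo_le_of_lipschitzOnWith {g : E → F} {x y : E} {C : ℝ≥0}
    (hg : ContDiff ℝ 2 g)
    (hL : LipschitzOnWith C (fderiv ℝ (fderiv ℝ g)) (closedBall x ‖y - x‖)) :
    ‖taylorRemainderTwo g x y‖ ≤ C * ‖y - x‖ ^ 3 := by
  set ρ := ‖y - x‖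
  set B := fderiv ℝ (fderiv ℝ g) x
  have hB : ∀ v w, B v w = B w v := hg.contDiffAt.isSymmSndFDerivAt (by simp)
  have hDg : Differentiable ℝ (fderiv ℝ g) :=
    (hg.fderiv_right one_add_one_eq_two.le).differentiable one_ne_zero
  have hR : ∀ w ∈ closedBall x ρ, HasFDerivWithinAt (taylorRemainderTwo g x)
      (fderiv ℝ g w - fderiv ℝ g x - B (w - x)) (closedBall x ρ) w := by
    intro w _
    have hsub : HasFDerivAt (· - x) (ContinuousLinearMap.id ℝ E) w :=
      (hasFDerivAt_id w).sub_const x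
    have hquad := ((B.hasFDerivAt.comp w hsub).clm_apply hsub).const_smul (1 / 2 : ℝ)
    have := (((hg.differentiable two_ne_zero w).hasFDerivAt.sub_const (g x)).sub
      ((fderiv ℝ g x).hasFDerivAt.comp w hsub)).sub hquad
    convert this.hasFDerivWithinAt using 1
    · ext v
      simp [taylorRemainderTwo, B]
    · -- the symmetry of `B` makes the derivative of `½ B (w - x) (w - x)` equal to `B (w - x)`
      ext v
      simp only [sub_apply, smul_apply, add_apply, ContinuousLinearMap.comp_apply,
        ContinuousLinearMap.flip_apply, ContinuousLinearMap.id_apply, Function.comp_apply,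
        hB v (w - x)]
      module
  have hbound :
      ∀ w ∈ closedBall x ρ, ‖fderiv ℝ g w - fderiv ℝ g x - B (w - x)‖ ≤ C * ρ ^ 2 := by
    intro w hw
    calc _ ≤ C * ρ * ‖w - x‖ := norm_sub_sub_fderiv_le_of_lipschitzOnWith hDg hL hw
      _ ≤ C * ρ * ρ := by gcongr; exact mem_closedBall_iff_norm.mp hw
      _ = C * ρ ^ 2 := by ring
  have := (convex_closedBall x ρ).norm_image_sub_le_of_norm_hasFDerivWithin_le hR hbound
    (mem_closedBall_self (norm_nonneg _)) (mem_closedBall_iff_norm.mpr le_rfl)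
  simpa [taylorRemainderTwo, pow_succ, mul_assoc] using this

theorem exists_norm_taylorRemainderTwo_le_of_isCompact [ProperSpace E] {g : E → F}
    (hg : ContDiff ℝ 3 g) {Q : Set E} (hQ : IsCompact Q) :
    ∃ C : ℝ≥0, ∀ x ∈ Q, ∀ y, ‖y - x‖ ≤ 1 → ‖taylorRemainderTwo g x y‖ ≤ C * ‖y - x‖ ^ 3 := by
  have hD2g : ContDiff ℝ 1 (fderiv ℝ (fderiv ℝ g)) :=
    (hg.fderiv_right (m := 2) (by norm_num)).fderiv_right (by norm_num)
  obtain ⟨C, hC⟩ := LocallyLipschitzOn.exists_lipschitzOnWith_of_compact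
    (hQ.cthickening (r := 1)) hD2g.locallyLipschitz.locallyLipschitzOn
  refine ⟨C, fun x hx y hy => norm_taylorRemainderTwo_le_of_lipschitzOnWith
    (hg.of_le (by norm_num)) (hC.mono ?_)⟩
  exact (closedBall_subset_closedBall hy).trans (closedBall_subset_cthickening hx 1)

end Taylor

section Wirtinger

open EuclideanSpace

variable {n : ℕ}

theorem EuclideanSpace.sum_re_smul_single_add_im_smul_single (h : EuclideanSpace ℂ (Fin n)) :
    ∑ j, ((h j).re • single j (1 : ℂ) + (h j).im • single j I) = h := by
  ext i
  simp [Pi.single_apply, ← ite_add_zero, re_add_im]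

theorem EuclideanSpace.clm_apply_eq_sum {F : Type*} [AddCommGroup F] [Module ℝ F]
    [TopologicalSpace F] (φ : EuclideanSpace ℂ (Fin n) →L[ℝ] F) (h : EuclideanSpace ℂ (Fin n)) :
    φ h = ∑ j, ((h j).re • φ (single j 1) + (h j).im • φ (single j I)) := by
  conv_lhs => rw [← sum_re_smul_single_add_im_smul_single h]
  simp only [map_sum, map_add, map_smul]

theorem EuclideanSpace.clm_apply_apply_self_eq_sum
    (B : EuclideanSpace ℂ (Fin n) →L[ℝ] EuclideanSpace ℂ (Fin n) →L[ℝ] ℝ)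
    (h : EuclideanSpace ℂ (Fin n)) :
    B h h = ∑ j, ∑ k,
      ((h j).re * (h k).re * B (single j 1) (single k 1)
      + (h j).re * (h k).im * B (single j 1) (single k I)
      + (h j).im * (h k).re * B (single j I) (single k 1)
      + (h j).im * (h k).im * B (single j I) (single k I)) := by
  rw [clm_apply_eq_sum B h]
  simp only [sum_apply, add_apply, smul_apply, clm_apply_eq_sum (B _) h, smul_eq_mul,
    Finset.mul_sum, ← Finset.sum_add_distrib]
  exact Finset.sum_congr rfl fun j _ => Finset.sum_congr rfl fun k _ => by ring

variable {r : EuclideanSpace ℂ (Fin n) → ℝ} {ζ : EuclideanSpace ℂ (Fin n)}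

theorem wirtingerDz_ofReal (hr : DifferentiableAt ℝ r ζ) (j : Fin n) :
    wirtingerDz (fun w => (r w : ℂ)) ζ j
      = (1 / 2 : ℂ) * (fderiv ℝ r ζ (single j 1) - I * fderiv ℝ r ζ (single j I)) := by
  have hD : HasFDerivAt (fun w => (r w : ℂ)) (ofRealCLM.comp (fderiv ℝ r ζ)) ζ :=
    ofRealCLM.hasFDerivAt.comp ζ hr.hasFDerivAt
  simp [wirtingerDz, hD.fderiv]

theorem fderiv_wirtingerDz_ofReal (hr : ContDiff ℝ 2 r) (k : Fin n)
    (v : EuclideanSpace ℂ (Fin n)) :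
    fderiv ℝ (fun w => wirtingerDz (fun u => (r u : ℂ)) w k) ζ v
      = (1 / 2 : ℂ) * (fderiv ℝ (fderiv ℝ r) ζ v (single k 1)
          - I * fderiv ℝ (fderiv ℝ r) ζ v (single k I)) := by
  have hD : HasFDerivAt (fderiv ℝ r) (fderiv ℝ (fderiv ℝ r) ζ) ζ :=
    ((hr.fderiv_right one_add_one_eq_two.le).differentiable one_ne_zero ζ).hasFDerivAt
  have hcoord (a : EuclideanSpace ℂ (Fin n)) : HasFDerivAt (fun w => (fderiv ℝ r w a : ℂ))
      (ofRealCLM.comp ((ContinuousLinearMap.apply ℝ ℝ a).comp (fderiv ℝ (fderiv ℝ r) ζ))) ζ :=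
    ofRealCLM.hasFDerivAt.comp ζ ((ContinuousLinearMap.apply ℝ ℝ a).hasFDerivAt.comp ζ hD)
  have hfun : (fun w => wirtingerDz (fun u => (r u : ℂ)) w k) = fun w =>
      (1 / 2 : ℂ) * ((fderiv ℝ r w (single k 1) : ℂ) - I * (fderiv ℝ r w (single k I) : ℂ)) :=
    funext fun w => wirtingerDz_ofReal (hr.differentiable two_ne_zero w) k
  have hW : HasFDerivAt (fun w => (1 / 2 : ℂ) *
      ((fderiv ℝ r w (single k 1) : ℂ) - I * (fderiv ℝ r w (single k I) : ℂ))) _ ζ :=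
    ((hcoord _).sub ((hcoord _).const_mul I)).const_mul (1 / 2 : ℂ)
  rw [hfun, hW.fderiv]
  simp

theorem wirtingerDz_wirtingerDz_ofReal (hr : ContDiff ℝ 2 r) (j k : Fin n) :
    wirtingerDz (fun w => wirtingerDz (fun u => (r u : ℂ)) w k) ζ j = (1 / 4 : ℂ) *
      (fderiv ℝ (fderiv ℝ r) ζ (single j 1) (single k 1)
        - I * fderiv ℝ (fderiv ℝ r) ζ (single j 1) (single k I)
        - I * fderiv ℝ (fderiv ℝ r) ζ (single j I) (single k 1)
        - fderiv ℝ (fderiv ℝ r) ζ (single j I) (single k I)) := by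
  rw [wirtingerDz, fderiv_wirtingerDz_ofReal hr, fderiv_wirtingerDz_ofReal hr]
  ring_nf
  rw [I_sq]
  ring

theorem wirtingerDzbar_wirtingerDz_ofReal (hr : ContDiff ℝ 2 r) (j k : Fin n) :
    wirtingerDzbar (fun w => wirtingerDz (fun u => (r u : ℂ)) w j) ζ k = (1 / 4 : ℂ) *
      (fderiv ℝ (fderiv ℝ r) ζ (single j 1) (single k 1)
        + I * fderiv ℝ (fderiv ℝ r) ζ (single j 1) (single k I)
        - I * fderiv ℝ (fderiv ℝ r) ζ (single j I) (single k 1)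
        + fderiv ℝ (fderiv ℝ r) ζ (single j I) (single k I)) := by
  have hB : ∀ v w, fderiv ℝ (fderiv ℝ r) ζ v w = fderiv ℝ (fderiv ℝ r) ζ w v :=
    hr.contDiffAt.isSymmSndFDerivAt (by simp)
  rw [wirtingerDzbar, fderiv_wirtingerDz_ofReal hr, fderiv_wirtingerDz_ofReal hr,
    hB (single k 1), hB (single k 1), hB (single k I), hB (single k I)]
  ring_nf
  rw [I_sq]
  ring

theorem re_mul_mul_add_re_mul_mul_conj (a b c d : ℝ) (u w : ℂ) :
    ((1 / 4 : ℂ) * (a - I * b - I * c - d) * u * w).re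
      + ((1 / 4 : ℂ) * (a + I * b - I * c + d) * u * starRingEnd ℂ w).re
      = (1 / 2) * (u.re * w.re * a + u.re * w.im * b + u.im * w.re * c + u.im * w.im * d) := by
  simp [mul_re, mul_im]
  ring

theorem two_mul_re_sum_wirtingerDz_mul (hr : DifferentiableAt ℝ r ζ)
    (h : EuclideanSpace ℂ (Fin n)) :
    2 * (∑ j, wirtingerDz (fun w => (r w : ℂ)) ζ j * h j).re = fderiv ℝ r ζ h := by
  rw [re_sum, Finset.mul_sum, clm_apply_eq_sum (fderiv ℝ r ζ) h]
  refine Finset.sum_congr rfl fun j _ => ?_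
  rw [wirtingerDz_ofReal hr]
  simp [mul_re, mul_im]
  ring

theorem re_sum_wirtingerDz_wirtingerDz_add_re_leviForm (hr : ContDiff ℝ 2 r)
    (h : EuclideanSpace ℂ (Fin n)) :
    (∑ j, ∑ k, wirtingerDz (fun w => wirtingerDz (fun u => (r u : ℂ)) w k) ζ j * h j * h k).re
      + (leviForm r ζ h).re = (1 / 2) * fderiv ℝ (fderiv ℝ r) ζ h h := by
  simp only [leviForm, re_sum, ← Finset.sum_add_distrib, clm_apply_apply_self_eq_sum,
    Finset.mul_sum, wirtingerDz_wirtingerDz_ofReal hr, wirtingerDzbar_wirtingerDz_ofReal hr,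
    re_mul_mul_add_re_mul_mul_conj]

theorem two_mul_re_PhiK (hr : ContDiff ℝ 2 r) (K : ℝ) (z : EuclideanSpace ℂ (Fin n)) :
    2 * (PhiK r K ζ z).re = -r ζ - r z + (leviForm r ζ (ζ - z)).re + 2 * K * ‖ζ - z‖ ^ 3
      + taylorRemainderTwo r ζ z := by
  have hlin := two_mul_re_sum_wirtingerDz_mul (hr.differentiable two_ne_zero ζ) (ζ - z)
  have hquad := re_sum_wirtingerDz_wirtingerDz_add_re_leviForm hr (ζ := ζ) (ζ - z)
  have hneg : z - ζ = -(ζ - z) := (neg_sub ζ z).symm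
  simp only [PiLp.sub_apply] at hlin hquad
  rw [PhiK, leviPolynomial, show (1 / 2 : ℂ) = ((1 / 2 : ℝ) : ℂ) by norm_num]
  simp only [add_re, sub_re, re_ofReal_mul, ofReal_re, taylorRemainderTwo, hneg, map_neg,
    neg_apply, neg_neg, smul_eq_mul]
  linarith

end Wirtinger

theorem support_function_lower_bound (n : ℕ)
    (r : EuclideanSpace ℂ (Fin n) → ℝ) (hr : ContDiff ℝ 3 r)
    (Q : Set (EuclideanSpace ℂ (Fin n))) (hQ : IsCompact Q) :
    ∃ ε > (0 : ℝ), ∃ M : ℝ,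
      (∀ K : ℝ, ∀ ζ ∈ Q, ∀ z ∈ Q, ‖ζ - z‖ < ε →
        2 * (PhiK r K ζ z).re ≥
          -(r ζ) - r z + (leviForm r ζ (ζ - z)).re + (2 * K - M) * ‖ζ - z‖ ^ 3) ∧
      (∀ K : ℝ, M / 2 ≤ K → ∀ ζ ∈ Q, ∀ z ∈ Q, ‖ζ - z‖ < ε →
        2 * (PhiK r K ζ z).re ≥
          -(r ζ) - r z + (leviForm r ζ (ζ - z)).re + K * ‖ζ - z‖ ^ 3) := by
  obtain ⟨C, hC⟩ := exists_norm_taylorRemainderTwo_le_of_isCompact hr hQ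
  have hΦ (K : ℝ) {ζ z} (hζ : ζ ∈ Q) (hz : ‖ζ - z‖ < 1) :
      -r ζ - r z + (leviForm r ζ (ζ - z)).re + (2 * K - C) * ‖ζ - z‖ ^ 3
        ≤ 2 * (PhiK r K ζ z).re := by
    have hR := hC ζ hζ z (by rw [norm_sub_rev]; exact hz.le)
    rw [norm_sub_rev z ζ, Real.norm_eq_abs, abs_le] at hR
    rw [two_mul_re_PhiK (hr.of_le (by norm_num))]
    linarith [hR.1]
  refine ⟨1, one_pos, 2 * C, fun K ζ hζ z _ hz => ?_, fun K hK ζ hζ z _ hz => ?_⟩ <;>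
    nlinarith [hΦ K hζ hz, C.coe_nonneg, pow_nonneg (norm_nonneg (ζ - z)) 3]
end
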